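/- arXiv:1808.06793 — 5 statements merged into one kernel-verified Lean document; each statement's English description precedes it below -/
import Mathlib

section
/- For the Voiculescu matrices Ω_n, S_n, the closed curve r ↦ det(rΩ_nS_nΩ_n^{-1}S_n^{-1} + (1−r)1) = (1 + r(ω̄_n − 1))^n, r ∈ [0,1], traversed as r goes from 0 to 1, has winding number −1; in particular it is nonzero. -/
open Complex Set Real

/-- A continuous real function on `[0,1]` all of whose values are integer multiples of `2π`
takes the same value at `0` and `1`. -/
lemma aux_const (h : ℝ → ℝ) (hc : ContinuousOn h (Set.Icc 0 1))
    (hint : ∀ r ∈ Set.Icc (0:ℝ) 1, ∃ k : ℤ, h r = k * (2 * Real.pi)) :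
    h 1 = h 0 := by
  obtain ⟨k0, hk0⟩ := hint 0 (by norm_num)
  obtain ⟨k1, hk1⟩ := hint 1 (by norm_num)
  by_contra hne
  have hkne : k0 ≠ k1 := by
    intro h'; apply hne; rw [hk1, hk0, h']
  have hpi : (0:ℝ) < Real.pi := Real.pi_pos
  set m : ℤ := min k0 k1 with hm
  have hmid : (m : ℝ) * (2 * Real.pi) + Real.pi ∈ Set.uIcc (h 0) (h 1) := by
    rw [Set.mem_uIcc]
    rcases le_or_gt k0 k1 with hle | hlt
    · left
      constructor
      · rw [hk0, hm, min_eq_left hle]; nlinarith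
      · rw [hk1]
        have : m + 1 ≤ k1 := by omega
        have : (m:ℝ) + 1 ≤ (k1:ℝ) := by exact_mod_cast this
        nlinarith
    · right
      constructor
      · rw [hk1, hm, min_eq_right hlt.le]; nlinarith
      · rw [hk0]
        have : m + 1 ≤ k0 := by omega
        have : (m:ℝ) + 1 ≤ (k0:ℝ) := by exact_mod_cast this
        nlinarith
  have huIcc : Set.uIcc (0:ℝ) 1 = Set.Icc 0 1 := Set.uIcc_of_le (by norm_num)
  have := intermediate_value_uIcc (f := h) (a := (0:ℝ)) (b := 1) (by rwa [huIcc])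
  obtain ⟨r, hr, hreq⟩ := this hmid
  rw [huIcc] at hr
  obtain ⟨k, hk⟩ := hint r hr
  rw [hk] at hreq
  have : ((2*k : ℤ) : ℝ) = ((2*m + 1 : ℤ) : ℝ) := by push_cast; nlinarith
  have : (2*k : ℤ) = 2*m + 1 := by exact_mod_cast this
  omega

/-- The closed curve `γ(r) = (1 + r(ω̄_n − 1))^n`, `r ∈ [0,1]`, where `ω̄_n = exp(−2πi/n)`
(the determinant curve of `r·Ω_nS_nΩ_n⁻¹S_n⁻¹ + (1−r)·1` for the Voiculescu matrices),
has winding number `−1` about the origin: any continuous logarithm `L` of `γ` on `[0,1]`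
satisfies `L 1 − L 0 = −2πi`; in particular the winding number is nonzero. -/
theorem stmt8 (n : ℕ) (hn : 2 ≤ n) (L : ℝ → ℂ)
    (hL : ContinuousOn L (Set.Icc 0 1))
    (hexp : ∀ r ∈ Set.Icc (0 : ℝ) 1,
      Complex.exp (L r) =
        (1 + (r : ℂ) * (Complex.exp (-(2 * Real.pi * Complex.I) / n) - 1)) ^ n) :
    L 1 - L 0 = -(2 * Real.pi * Complex.I) := by
  have hn0 : (n:ℂ) ≠ 0 := Nat.cast_ne_zero.mpr (by omega)
  have hnR : (0:ℝ) < n := by positivity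
  set ω : ℂ := Complex.exp (-(2 * Real.pi * Complex.I) / n) with hωdef
  rcases eq_or_lt_of_le hn with h2 | h3
  · -- n = 2 : the curve hits 0, contradiction with hexp
    exfalso
    have hω2 : ω = -1 := by
      rw [hωdef, ← h2]
      have : -(2 * (Real.pi:ℂ) * Complex.I) / (2:ℕ) = -((Real.pi:ℂ) * Complex.I) := by
        push_cast; ring
      rw [this, Complex.exp_neg, Complex.exp_pi_mul_I]
      norm_num
    have h12 := hexp (1/2) (by norm_num)
    rw [show ((((1:ℝ)/2 : ℝ)) : ℂ) = 1/2 by push_cast; ring, hω2] at h12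
    have : (1 + (1/2 : ℂ) * (-1 - 1)) = 0 := by ring
    rw [this, zero_pow (by omega)] at h12
    exact Complex.exp_ne_zero _ h12
  · -- n ≥ 3
    have hn3 : 3 ≤ n := h3
    set θ : ℝ := 2 * Real.pi / n with hθdef
    have hθpos : 0 < θ := by positivity
    have h3R : (3:ℝ) ≤ (n:ℝ) := by exact_mod_cast hn3
    have hpi := Real.pi_pos
    have hθlt : θ < Real.pi := by
      rw [hθdef, div_lt_iff₀ hnR]
      nlinarith
    have hωeq : ω = Complex.exp (((-θ : ℝ) : ℂ) * Complex.I) := by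
      rw [hωdef]
      congr 1
      rw [hθdef]
      push_cast
      field_simp
    set z : ℝ → ℂ := fun r => 1 + (r : ℂ) * (ω - 1) with hzdef
    have hz_im : ∀ r : ℝ, (z r).im = -(r * Real.sin θ) := by
      intro r
      have hωim : ω.im = -Real.sin θ := by
        rw [hωeq, Complex.exp_ofReal_mul_I_im, Real.sin_neg]
      simp [hzdef, hωim]
    have hz_mem : ∀ r ∈ Set.Icc (0:ℝ) 1, z r ∈ Complex.slitPlane := by
      intro r hr
      rcases eq_or_lt_of_le hr.1 with h0 | h0
      · left
        simp [hzdef, ← h0]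
      · right
        rw [hz_im]
        have : 0 < Real.sin θ := Real.sin_pos_of_pos_of_lt_pi hθpos hθlt
        nlinarith
    have hz_ne : ∀ r ∈ Set.Icc (0:ℝ) 1, z r ≠ 0 :=
      fun r hr => Complex.slitPlane_ne_zero (hz_mem r hr)
    set L₀ : ℝ → ℂ := fun r => (n : ℂ) * Complex.log (z r) with hL₀def
    have hzcont : Continuous z := by
      apply Continuous.add continuous_const
      exact (Complex.continuous_ofReal).mul continuous_const
    have hL₀cont : ContinuousOn L₀ (Set.Icc 0 1) := by
      apply ContinuousOn.mul continuousOn_const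
      intro r hr
      exact ((continuousAt_clog (hz_mem r hr)).comp hzcont.continuousAt).continuousWithinAt
    have hexp₀ : ∀ r ∈ Set.Icc (0:ℝ) 1, Complex.exp (L₀ r) = z r ^ n := by
      intro r hr
      rw [hL₀def]
      simp only
      rw [Complex.exp_nat_mul, Complex.exp_log (hz_ne r hr)]
    -- values of L₀ at endpoints
    have hL₀0 : L₀ 0 = 0 := by
      simp [hL₀def, hzdef]
    have hL₀1 : L₀ 1 = -(2 * Real.pi * Complex.I) := by
      have him : (((-θ : ℝ) : ℂ) * Complex.I).im = -θ := by simp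
      have hlog : Complex.log ω = ((-θ : ℝ) : ℂ) * Complex.I := by
        rw [hωeq, Complex.log_exp (by rw [him]; linarith) (by rw [him]; linarith)]
      simp only [hL₀def, hzdef]
      rw [show (1:ℂ) + ((1:ℝ):ℂ) * (ω - 1) = ω by push_cast; ring, hlog, hθdef]
      push_cast
      field_simp
    -- the difference
    set f : ℝ → ℂ := fun r => L r - L₀ r with hfdef
    have hfint : ∀ r ∈ Set.Icc (0:ℝ) 1, ∃ k : ℤ, f r = k * (2 * Real.pi * Complex.I) := by
      intro r hr
      rw [← Complex.exp_eq_one_iff, hfdef]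
      simp only
      rw [Complex.exp_sub, hexp r hr, hexp₀ r hr]
      rw [div_eq_one_iff_eq (pow_ne_zero _ (hz_ne r hr))]
    set h : ℝ → ℝ := fun r => (f r).im with hhdef
    have hhcont : ContinuousOn h (Set.Icc 0 1) :=
      Complex.continuous_im.comp_continuousOn (hL.sub hL₀cont)
    have hhint : ∀ r ∈ Set.Icc (0:ℝ) 1, ∃ k : ℤ, h r = k * (2 * Real.pi) := by
      intro r hr
      obtain ⟨k, hk⟩ := hfint r hr
      exact ⟨k, by rw [hhdef]; simp only [hk]; simp⟩
    have hkey := aux_const h hhcont hhint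
    obtain ⟨k0, hk0⟩ := hfint 0 (by norm_num)
    obtain ⟨k1, hk1⟩ := hfint 1 (by norm_num)
    have hk0k1 : k0 = k1 := by
      have h0 : h 0 = k0 * (2 * Real.pi) := by
        rw [hhdef]; simp only [hk0]; simp
      have h1 : h 1 = k1 * (2 * Real.pi) := by
        rw [hhdef]; simp only [hk1]; simp
      have heq : (k1 : ℝ) * (2 * Real.pi) = (k0 : ℝ) * (2 * Real.pi) := by
        rw [← h0, ← h1, hkey]
      have h2pi : (2 * Real.pi) ≠ 0 := by positivity
      have := mul_right_cancel₀ h2pi heq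
      exact_mod_cast this.symm
    have : L 1 - L 0 = (f 1 - f 0) + (L₀ 1 - L₀ 0) := by rw [hfdef]; simp only; ring
    rw [this, hk0, hk1, hk0k1, hL₀0, hL₀1]
    ring
end

section
/- For any integer m and the Voiculescu matrices, Ω_n^m S_n Ω_n^{-m} S_n^{-1} = ω_n^m · 1_n, and consequently ‖Ω_n^m S_n Ω_n^{-m} S_n^{-1} − 1_n‖ = |exp(2πim/n) − 1| → 0 as n → ∞, while the winding number of r ↦ det(r·Ω_n^m S_n Ω_n^{-m} S_n^{-1} + (1−r)·1_n) = (1 + r(ω_n^m − 1))^n equals m for n > 2|m|. -/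
open Complex Matrix Filter

/-- `ω_n = exp(2πi/n)`. -/
noncomputable def omg (n : ℕ) : ℂ := Complex.exp (2 * Real.pi * Complex.I / n)

/-- The `n×n` cyclic shift matrix `S_n`, with `S_n e_k = e_{k+1}` (indices mod `n`). -/
def Vshift (n : ℕ) : Matrix (Fin n) (Fin n) ℂ :=
  Matrix.of fun i j => if (i : ℕ) = ((j : ℕ) + 1) % n then 1 else 0

/-- The diagonal matrix `Ω_n = diag(ω_n, ω_n^2, …, ω_n^n)`. -/
noncomputable def VOmega (n : ℕ) : Matrix (Fin n) (Fin n) ℂ :=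
  Matrix.diagonal fun k => omg n ^ ((k : ℕ) + 1)

/-- `M ^ k` for an integer exponent `k`, negative powers via the matrix inverse. -/
noncomputable def zpowMat {n : ℕ} (M : Matrix (Fin n) (Fin n) ℂ) (k : ℤ) :
    Matrix (Fin n) (Fin n) ℂ :=
  if 0 ≤ k then M ^ k.toNat else M⁻¹ ^ (-k).toNat

/-- The operator norm on `n×n` complex matrices. -/
noncomputable def opNorm {n : ℕ} (M : Matrix (Fin n) (Fin n) ℂ) : ℝ :=
  ‖Matrix.toEuclideanCLM (n := Fin n) (𝕜 := ℂ) M‖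

/-!
Conjugating the shift `S_n` by the diagonal matrix `Ω_n^m` multiplies its nonzero entry in
column `j` by `ω_n^{m(j+2)} ω_n^{-m(j+1)} = ω_n^m`; this also holds for the wrapped-around entry
because `ω_n^n = 1`. Hence the commutator is the scalar `ω_n^m`, whose distance to `1` is
`|ω_n^m - 1|`.

For `2|m| < n` the point `ω_n^m = exp(2πim/n)` lies off the closed negative real axis, so the
segment `1 + r(ω_n^m - 1)` stays in the slit plane and `n · log(1 + r(ω_n^m - 1))` is a continuous
logarithm of the determinant curve with increment `n · 2πim/n`. Two continuous logarithms differ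
by a continuous function with values in `2πiℤ`, hence by a constant on `[0, 1]`.
-/

lemma Matrix.diagonal_mul_permMatrix {ι R : Type*} [Fintype ι] [DecidableEq ι]
    [NonAssocSemiring R] (d : ι → R) (σ : Equiv.Perm ι) :
    diagonal d * σ.permMatrix R = σ.permMatrix R * diagonal (d ∘ σ.symm) := by
  ext i j
  rw [diagonal_mul, mul_diagonal]
  by_cases h : σ i = j
  · subst h; simp
  · simp [Equiv.toPEquiv_apply, h]

lemma zpowMat_diagonal {n : ℕ} {d : Fin n → ℂ} (hd : ∀ i, d i ≠ 0) (k : ℤ) :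
    zpowMat (diagonal d) k = diagonal fun i => d i ^ k := by
  have hinv : (diagonal d)⁻¹ = diagonal fun i => (d i)⁻¹ :=
    inv_eq_right_inv <| by rw [diagonal_mul_diagonal]; simp [hd]
  unfold zpowMat
  split_ifs with hk
  · lift k to ℕ using hk
    simp [diagonal_pow]
  · obtain ⟨j, rfl⟩ : ∃ j : ℕ, k = -j := ⟨(-k).toNat, by omega⟩
    simp [hinv, diagonal_pow]

lemma vshift_eq_permMatrix (n : ℕ) [NeZero n] :
    Vshift n = Equiv.Perm.permMatrix ℂ (Equiv.subRight (1 : Fin n)) := by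
  ext i j
  have hval : ((j + 1 : Fin n) : ℕ) = ((j : ℕ) + 1) % n := by
    simp [Fin.val_add, Nat.add_mod]
  simp [Vshift, Equiv.toPEquiv_apply, ← hval, Fin.val_inj, sub_eq_iff_eq_add]

lemma vshift_mul_inv (n : ℕ) [NeZero n] : Vshift n * (Vshift n)⁻¹ = 1 := by
  refine mul_nonsing_inv _ (isUnit_det_of_right_inverse (B := (Vshift n)ᵀ) ?_)
  rw [vshift_eq_permMatrix, transpose_permMatrix, ← permMatrix_mul, inv_mul_cancel,
    permMatrix_one]

lemma omg_pow_self {n : ℕ} (hn : n ≠ 0) : omg n ^ n = 1 :=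
  (Complex.isPrimitiveRoot_exp n hn).pow_eq_one

lemma omg_zpow (m : ℤ) (n : ℕ) : omg n ^ m = exp (2 * Real.pi * I * m / n) := by
  rw [omg, ← exp_int_mul]
  ring_nf

lemma omg_pow_succ_val_add_one {n : ℕ} [NeZero n] (j : Fin n) :
    omg n ^ (((j + 1 : Fin n) : ℕ) + 1) = omg n * omg n ^ ((j : ℕ) + 1) := by
  have h := omg_pow_self (NeZero.ne n)
  rw [← pow_succ', pow_eq_pow_mod _ h, pow_eq_pow_mod ((j : ℕ) + 1 + 1) h]
  simp [Fin.val_add, Nat.add_mod]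

lemma vOmega_conj_vshift (m : ℤ) (n : ℕ) [NeZero n] :
    zpowMat (VOmega n) m * Vshift n * zpowMat (VOmega n) (-m) = omg n ^ m • Vshift n := by
  have hd : ∀ i : Fin n, omg n ^ ((i : ℕ) + 1) ≠ 0 := fun _ => pow_ne_zero _ (exp_ne_zero _)
  have hquot : ∀ j : Fin n,
      (omg n ^ (((j + 1 : Fin n) : ℕ) + 1)) ^ m * (omg n ^ ((j : ℕ) + 1)) ^ (-m) = omg n ^ m := by
    intro j
    rw [omg_pow_succ_val_add_one, mul_zpow, _root_.zpow_neg, mul_assoc,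
      mul_inv_cancel₀ (zpow_ne_zero _ (hd j)), mul_one]
  rw [VOmega, zpowMat_diagonal hd, zpowMat_diagonal hd, vshift_eq_permMatrix,
    diagonal_mul_permMatrix, mul_assoc, diagonal_mul_diagonal]
  conv_rhs => rw [← Matrix.mul_one (Equiv.Perm.permMatrix ℂ _), ← Matrix.mul_smul,
    smul_one_eq_diagonal]
  congr 2
  ext j
  simpa using hquot j

theorem vOmega_vshift_commutator (m : ℤ) (n : ℕ) [NeZero n] :
    zpowMat (VOmega n) m * Vshift n * zpowMat (VOmega n) (-m) * (Vshift n)⁻¹ =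
      omg n ^ m • (1 : Matrix (Fin n) (Fin n) ℂ) := by
  rw [vOmega_conj_vshift, smul_mul_assoc, vshift_mul_inv]

lemma opNorm_smul_one {n : ℕ} [NeZero n] (c : ℂ) :
    opNorm (c • (1 : Matrix (Fin n) (Fin n) ℂ)) = ‖c‖ := by
  rw [opNorm, map_smul, map_one, norm_smul, ContinuousLinearMap.one_def,
    ContinuousLinearMap.norm_id, mul_one]

theorem opNorm_vOmega_vshift_commutator_sub_one (m : ℤ) (n : ℕ) [NeZero n] :
    opNorm (zpowMat (VOmega n) m * Vshift n * zpowMat (VOmega n) (-m) * (Vshift n)⁻¹ - 1) =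
      ‖exp (2 * Real.pi * I * m / n) - 1‖ := by
  rw [vOmega_vshift_commutator, ← omg_zpow, ← opNorm_smul_one (n := n), sub_smul, one_smul]

theorem tendsto_opNorm_vOmega_vshift_commutator_sub_one (m : ℤ) :
    Tendsto (fun n : ℕ =>
        opNorm (zpowMat (VOmega n) m * Vshift n * zpowMat (VOmega n) (-m) * (Vshift n)⁻¹ - 1))
      atTop (nhds 0) := by
  have hexp : Tendsto (fun n : ℕ => exp (2 * Real.pi * I * m / n)) atTop (nhds 1) := by
    have := (continuous_exp.tendsto 0).comp
      (tendsto_const_div_atTop_nhds_zero_nat (2 * Real.pi * I * m))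
    rwa [exp_zero] at this
  have hnorm := (hexp.sub_const 1).norm
  rw [sub_self, norm_zero] at hnorm
  refine hnorm.congr' ?_
  filter_upwards [eventually_ne_atTop 0] with n hn
  have : NeZero n := ⟨hn⟩
  exact (opNorm_vOmega_vshift_commutator_sub_one m n).symm

theorem IsPreconnected.sub_eq_sub_of_exp_eq {X : Type*} [TopologicalSpace X] {s : Set X}
    (hs : IsPreconnected s) {f g : X → ℂ} (hf : ContinuousOn f s) (hg : ContinuousOn g s)
    (hfg : ∀ x ∈ s, exp (f x) = exp (g x)) {x y : X} (hx : x ∈ s) (hy : y ∈ s) :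
    f x - g x = f y - g y := by
  have hperiod : ∀ z ∈ s, ∃ k : ℤ, f z - g z = k * (2 * Real.pi * I) := fun z hz =>
    exp_eq_one_iff.mp (by rw [exp_sub, hfg z hz, div_self (exp_ne_zero _)])
  have hre : ∀ z ∈ s, (f z - g z).re = 0 := fun z hz => by
    obtain ⟨k, hk⟩ := hperiod z hz
    simp [hk]
  have him : (f x - g x).im = (f y - g y).im :=
    hs.constant_of_mapsTo (T := (AddSubgroup.zmultiples (2 * Real.pi) : Set ℝ))
      (isDiscrete_iff_discreteTopology.mpr
        (inferInstanceAs (DiscreteTopology (AddSubgroup.zmultiples (2 * Real.pi)))))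
      (continuous_im.comp_continuousOn (hf.sub hg))
      (fun z hz => by
        obtain ⟨k, hk⟩ := hperiod z hz
        exact ⟨k, by simp [hk]⟩) hx hy
  exact Complex.ext (by rw [hre x hx, hre y hy]) him

theorem sub_eq_natCast_mul_log_of_exp_eq_pow {ζ : ℂ} (hζ : ζ ∈ slitPlane) (n : ℕ) {L : ℝ → ℂ}
    (hL : ContinuousOn L (Set.Icc 0 1))
    (hexp : ∀ r ∈ Set.Icc (0 : ℝ) 1, exp (L r) = (1 + r * (ζ - 1)) ^ n) :
    L 1 - L 0 = n * log ζ := by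
  have hseg : ∀ r ∈ Set.Icc (0 : ℝ) 1, 1 + r * (ζ - 1) ∈ slitPlane := fun r hr => by
    simpa [Complex.real_smul] using
      starConvex_one_slitPlane.add_smul_mem (by simpa using hζ) hr.1 hr.2
  have hlog : ContinuousOn (fun r : ℝ => n * log (1 + r * (ζ - 1))) (Set.Icc 0 1) :=
    continuousOn_const.mul ((Continuous.continuousOn (by fun_prop)).clog hseg)
  have hconst := isPreconnected_Icc.sub_eq_sub_of_exp_eq hL hlog
    (fun r hr => by rw [hexp r hr, exp_nat_mul, exp_log (slitPlane_ne_zero (hseg r hr))])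
    (Set.right_mem_Icc.2 zero_le_one) (Set.left_mem_Icc.2 zero_le_one)
  simp only [ofReal_one, ofReal_zero, one_mul, zero_mul, add_zero, add_sub_cancel, log_one,
    mul_zero, sub_zero] at hconst
  linear_combination hconst

lemma abs_two_pi_mul_div_lt_pi {m : ℤ} {n : ℕ} (h : 2 * m.natAbs < n) :
    |2 * Real.pi * m / n| < Real.pi := by
  have hn : (0 : ℝ) < n := by exact_mod_cast (show 0 < n by omega)
  have hm : 2 * |(m : ℝ)| < n := by
    rw [Int.cast_abs.symm, Int.abs_eq_natAbs]
    exact_mod_cast h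
  rw [abs_div, abs_mul, abs_of_pos Real.two_pi_pos, abs_of_pos hn, div_lt_iff₀ hn]
  nlinarith [Real.pi_pos]

lemma im_two_pi_I_mul_div (m : ℤ) (n : ℕ) :
    (2 * Real.pi * I * m / n).im = 2 * Real.pi * m / n := by
  rw [show 2 * Real.pi * I * m / n = ((2 * Real.pi * m / n : ℝ) : ℂ) * I by push_cast; ring,
    mul_I_im, ofReal_re]

lemma log_omg_zpow {m : ℤ} {n : ℕ} (h : 2 * m.natAbs < n) :
    log (omg n ^ m) = 2 * Real.pi * I * m / n := by
  have hbound := abs_lt.mp (abs_two_pi_mul_div_lt_pi h)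
  rw [omg_zpow, log_exp] <;> rw [im_two_pi_I_mul_div] <;> linarith

lemma omg_zpow_mem_slitPlane {m : ℤ} {n : ℕ} (h : 2 * m.natAbs < n) : omg n ^ m ∈ slitPlane := by
  rw [mem_slitPlane_iff_arg, ← log_im, log_omg_zpow h, im_two_pi_I_mul_div]
  exact ⟨(abs_lt.mp (abs_two_pi_mul_div_lt_pi h)).2.ne, zpow_ne_zero _ (exp_ne_zero _)⟩

theorem sub_eq_two_pi_I_mul_of_exp_eq_det_curve (m : ℤ) {n : ℕ} (h : 2 * m.natAbs < n)
    {L : ℝ → ℂ} (hL : ContinuousOn L (Set.Icc 0 1))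
    (hexp : ∀ r ∈ Set.Icc (0 : ℝ) 1, exp (L r) = (1 + r * (omg n ^ m - 1)) ^ n) :
    L 1 - L 0 = 2 * Real.pi * I * m := by
  have hn : (n : ℂ) ≠ 0 := Nat.cast_ne_zero.mpr (by omega)
  rw [sub_eq_natCast_mul_log_of_exp_eq_pow (omg_zpow_mem_slitPlane h) n hL hexp, log_omg_zpow h]
  field_simp

/-- For any integer `m`: `Ω_n^m S_n Ω_n^{−m} S_n^{−1} = ω_n^m • 1`; consequently
`‖Ω_n^m S_n Ω_n^{−m} S_n^{−1} − 1‖ = |exp(2πim/n) − 1| → 0` as `n → ∞`; and for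
`n > 2|m|` the determinant curve `γ(r) = (1 + r(ω_n^m − 1))^n` has winding number `m`
about the origin (any continuous logarithm `L` satisfies `L 1 − L 0 = 2πi·m`). -/
theorem stmt9 (m : ℤ) :
    (∀ n : ℕ, 1 ≤ n →
      zpowMat (VOmega n) m * Vshift n * zpowMat (VOmega n) (-m) * (Vshift n)⁻¹ =
        (omg n ^ m) • (1 : Matrix (Fin n) (Fin n) ℂ)) ∧
    (∀ n : ℕ, 1 ≤ n →
      opNorm (zpowMat (VOmega n) m * Vshift n * zpowMat (VOmega n) (-m) * (Vshift n)⁻¹ - 1) =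
        ‖Complex.exp (2 * Real.pi * Complex.I * m / n) - 1‖) ∧
    Filter.Tendsto (fun n : ℕ =>
        opNorm (zpowMat (VOmega n) m * Vshift n * zpowMat (VOmega n) (-m) * (Vshift n)⁻¹ - 1))
      Filter.atTop (nhds 0) ∧
    (∀ n : ℕ, 2 * m.natAbs < n → ∀ L : ℝ → ℂ, ContinuousOn L (Set.Icc 0 1) →
      (∀ r ∈ Set.Icc (0 : ℝ) 1,
        Complex.exp (L r) = (1 + (r : ℂ) * (omg n ^ m - 1)) ^ n) →
      L 1 - L 0 = 2 * Real.pi * Complex.I * m) :=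
  ⟨fun n hn => have : NeZero n := ⟨by omega⟩; vOmega_vshift_commutator m n,
    fun n hn => have : NeZero n := ⟨by omega⟩; opNorm_vOmega_vshift_commutator_sub_one m n,
    tendsto_opNorm_vOmega_vshift_commutator_sub_one m,
    fun _ hn _ hL hexp => sub_eq_two_pi_I_mul_of_exp_eq_det_curve m hn hL hexp⟩
end

section
/- Define the 2n×2n unitary matrices T_1 = [[0, Ω_n],[Ω_n^{-1}, 0]], T_2 = [[0, S_n],[S_n^{-1}, 0]], T_3 = [[0, 1_n],[1_n, 0]] (block form). Then T_i² = 1 for i = 1,2,3, and (T_1T_2T_3)² = ω̄_n · 1_{2n}. -/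
open Complex Matrix

noncomputable def myOi (n : ℕ) : Matrix (Fin n) (Fin n) ℂ :=
  Matrix.diagonal fun k => (omg n ^ ((k : ℕ) + 1))⁻¹

def mySi (n : ℕ) : Matrix (Fin n) (Fin n) ℂ :=
  Matrix.of fun i j => if (j : ℕ) = ((i : ℕ) + 1) % n then 1 else 0

lemma omg_ne_zero (n : ℕ) : omg n ≠ 0 := Complex.exp_ne_zero _

lemma omg_pow_n (n : ℕ) (hn : 1 ≤ n) : omg n ^ n = 1 := by
  rw [omg, ← Complex.exp_nat_mul]
  have hne : (n : ℂ) ≠ 0 := by exact_mod_cast (Nat.one_le_iff_ne_zero.mp hn)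
  rw [mul_div_cancel₀ _ hne]
  simpa using Complex.exp_int_mul_two_pi_mul_I 1

lemma conj_omg (n : ℕ) : (starRingEnd ℂ) (omg n) = (omg n)⁻¹ := by
  rw [omg, ← Complex.exp_conj, ← Complex.exp_neg]
  congr 1
  simp only [map_div₀, _root_.map_mul, Complex.conj_I, Complex.conj_ofReal, map_ofNat,
    map_natCast]
  ring

lemma omg_pow_mod (n : ℕ) (hn : 1 ≤ n) (a : ℕ) : omg n ^ (a % n) = omg n ^ a :=
  (pow_eq_pow_mod a (omg_pow_n n hn)).symm

lemma VOmega_mul_myOi (n : ℕ) : VOmega n * myOi n = 1 := by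
  rw [VOmega, myOi, Matrix.diagonal_mul_diagonal]
  convert Matrix.diagonal_one with k
  exact mul_inv_cancel₀ (pow_ne_zero _ (omg_ne_zero n))

lemma myOi_mul_VOmega (n : ℕ) : myOi n * VOmega n = 1 :=
  mul_eq_one_comm.mp (VOmega_mul_myOi n)

lemma VOmega_inv (n : ℕ) : (VOmega n)⁻¹ = myOi n :=
  Matrix.inv_eq_right_inv (VOmega_mul_myOi n)

/-- the "next" index -/
def nxt {n : ℕ} (hn : 1 ≤ n) (i : Fin n) : Fin n :=
  ⟨((i : ℕ) + 1) % n, Nat.mod_lt _ hn⟩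

/-- the "previous" index -/
def prv {n : ℕ} (hn : 1 ≤ n) (i : Fin n) : Fin n :=
  ⟨((i : ℕ) + (n - 1)) % n, Nat.mod_lt _ hn⟩

lemma cond_iff {n : ℕ} (hn : 1 ≤ n) (i k : Fin n) :
    (k : ℕ) = ((i : ℕ) + 1) % n ↔ k = nxt hn i := by
  rw [Fin.ext_iff]; rfl

lemma cond_iff' {n : ℕ} (hn : 1 ≤ n) (i x : Fin n) :
    (i : ℕ) = ((x : ℕ) + 1) % n ↔ x = prv hn i := by
  constructor
  · intro h
    apply Fin.ext
    show (x : ℕ) = ((i : ℕ) + (n - 1)) % n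
    rw [h, Nat.mod_add_mod]
    have h1 : (x : ℕ) + 1 + (n - 1) = (x : ℕ) + n := by omega
    rw [h1, Nat.add_mod_right, Nat.mod_eq_of_lt x.isLt]
  · rintro rfl
    show (i : ℕ) = (((i : ℕ) + (n - 1)) % n + 1) % n
    rw [Nat.mod_add_mod]
    have h1 : (i : ℕ) + (n - 1) + 1 = (i : ℕ) + n := by omega
    rw [h1, Nat.add_mod_right, Nat.mod_eq_of_lt i.isLt]

lemma nxt_val_eq_iff {n : ℕ} (hn : 1 ≤ n) (i j : Fin n) :
    (((i : ℕ) + 1) % n = ((j : ℕ) + 1) % n) ↔ i = j := by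
  constructor
  · intro h
    have h2 := (Nat.ModEq.add_right_cancel' 1 (h : (i : ℕ) + 1 ≡ (j : ℕ) + 1 [MOD n]))
    have hi : (i : ℕ) % n = (i : ℕ) := Nat.mod_eq_of_lt i.isLt
    have hj : (j : ℕ) % n = (j : ℕ) := Nat.mod_eq_of_lt j.isLt
    exact Fin.ext (by rwa [Nat.ModEq, hi, hj] at h2)
  · rintro rfl; rfl

lemma Vshift_mul_mySi (n : ℕ) (hn : 1 ≤ n) : Vshift n * mySi n = 1 := by
  ext i j
  rw [Matrix.mul_apply]
  simp only [Vshift, mySi, Matrix.of_apply, Matrix.one_apply]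
  simp only [cond_iff' hn, ite_mul, one_mul, zero_mul, Finset.sum_ite_eq',
    Finset.mem_univ, if_true]
  have hiff : prv hn i = prv hn j ↔ i = j := by
    constructor
    · intro h
      have hpi : (i : ℕ) = ((prv hn i : ℕ) + 1) % n := (cond_iff' hn i _).mpr rfl
      have hpj : (j : ℕ) = ((prv hn j : ℕ) + 1) % n := (cond_iff' hn j _).mpr rfl
      exact Fin.ext (by rw [hpi, hpj, h])
    · rintro rfl; rfl
  rw [if_congr hiff rfl rfl]

lemma mySi_mul_Vshift (n : ℕ) (hn : 1 ≤ n) : mySi n * Vshift n = 1 :=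
  mul_eq_one_comm.mp (Vshift_mul_mySi n hn)

lemma Vshift_inv (n : ℕ) (hn : 1 ≤ n) : (Vshift n)⁻¹ = mySi n :=
  Matrix.inv_eq_right_inv (Vshift_mul_mySi n hn)

lemma myOi_conjT (n : ℕ) : (myOi n)ᴴ = VOmega n := by
  ext i j
  rcases eq_or_ne i j with rfl | h
  · simp [Matrix.conjTranspose_apply, myOi, VOmega, Complex.star_def, map_inv₀, map_pow,
      conj_omg]
  · simp [Matrix.conjTranspose_apply, myOi, VOmega, Matrix.diagonal_apply_ne, h, Ne.symm h]

lemma VOmega_conjT (n : ℕ) : (VOmega n)ᴴ = myOi n := by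
  ext i j
  rcases eq_or_ne i j with rfl | h
  · simp [Matrix.conjTranspose_apply, myOi, VOmega, Complex.star_def, map_pow, conj_omg,
      inv_pow]
  · simp [Matrix.conjTranspose_apply, myOi, VOmega, Matrix.diagonal_apply_ne, h, Ne.symm h]

lemma mySi_conjT (n : ℕ) : (mySi n)ᴴ = Vshift n := by
  ext i j
  simp [Matrix.conjTranspose_apply, mySi, Vshift, apply_ite (starRingEnd ℂ)]

lemma Vshift_conjT (n : ℕ) : (Vshift n)ᴴ = mySi n := by
  ext i j
  simp [Matrix.conjTranspose_apply, mySi, Vshift, apply_ite (starRingEnd ℂ)]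

-- Key commutation identity
lemma key1 (n : ℕ) (hn : 1 ≤ n) :
    (VOmega n * mySi n) * (myOi n * Vshift n) = (omg n)⁻¹ • 1 := by
  ext i j
  rw [Matrix.mul_apply]
  simp only [VOmega, myOi, Matrix.diagonal_mul, mySi, Vshift, Matrix.of_apply,
    Matrix.smul_apply, Matrix.one_apply, smul_eq_mul]
  simp only [cond_iff hn i, cond_iff hn j, mul_ite, mul_zero, mul_one, ite_mul, zero_mul,
    one_mul, Finset.sum_ite_eq', Finset.mem_univ, if_true]
  have hnx : nxt hn j = nxt hn i ↔ i = j := by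
    rw [Fin.ext_iff]
    exact (nxt_val_eq_iff hn j i).trans eq_comm
  have hp : omg n ^ ((nxt hn i : ℕ) + 1) = omg n ^ ((i:ℕ)+1) * omg n := by
    show omg n ^ (((i:ℕ)+1) % n + 1) = _
    rw [pow_succ, omg_pow_mod n hn]
  rcases eq_or_ne i j with rfl | h
  · simp only [if_pos rfl, hnx, if_pos rfl] -- reduce remaining ites if any
    rw [hp, mul_inv, ← mul_assoc, mul_inv_cancel₀ (pow_ne_zero _ (omg_ne_zero n)), one_mul]
  · rw [if_neg (fun hc => h (hnx.mp hc)), if_neg h]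

lemma key2 (n : ℕ) (hn : 1 ≤ n) :
    (myOi n * Vshift n) * (VOmega n * mySi n) = (omg n)⁻¹ • 1 := by
  have h1 : (VOmega n * mySi n) * (omg n • (myOi n * Vshift n)) = 1 := by
    rw [Matrix.mul_smul, key1 n hn, smul_smul,
      mul_inv_cancel₀ (omg_ne_zero n), one_smul]
  have h2 := mul_eq_one_comm.mp h1
  rw [Matrix.smul_mul] at h2
  calc (myOi n * Vshift n) * (VOmega n * mySi n)
      = (omg n)⁻¹ • (omg n • ((myOi n * Vshift n) * (VOmega n * mySi n))) := by
        rw [smul_smul, inv_mul_cancel₀ (omg_ne_zero n), one_smul]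
    _ = (omg n)⁻¹ • 1 := by rw [h2]

/-- `T₁ = [[0, Ω_n],[Ω_n⁻¹, 0]]`. -/
noncomputable def T1 (n : ℕ) : Matrix (Fin n ⊕ Fin n) (Fin n ⊕ Fin n) ℂ :=
  Matrix.fromBlocks 0 (VOmega n) (VOmega n)⁻¹ 0

/-- `T₂ = [[0, S_n],[S_n⁻¹, 0]]`. -/
noncomputable def T2 (n : ℕ) : Matrix (Fin n ⊕ Fin n) (Fin n ⊕ Fin n) ℂ :=
  Matrix.fromBlocks 0 (Vshift n) (Vshift n)⁻¹ 0

/-- `T₃ = [[0, 1],[1, 0]]`. -/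
noncomputable def T3 (n : ℕ) : Matrix (Fin n ⊕ Fin n) (Fin n ⊕ Fin n) ℂ :=
  Matrix.fromBlocks 0 1 1 0

/-- The `2n×2n` matrices `T₁, T₂, T₃` are unitary, satisfy `Tᵢ² = 1`,
and `(T₁T₂T₃)² = ω̄_n • 1`. -/
theorem stmt10 (n : ℕ) (hn : 1 ≤ n) :
    T1 n ∈ Matrix.unitaryGroup (Fin n ⊕ Fin n) ℂ ∧
    T2 n ∈ Matrix.unitaryGroup (Fin n ⊕ Fin n) ℂ ∧
    T3 n ∈ Matrix.unitaryGroup (Fin n ⊕ Fin n) ℂ ∧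
    T1 n ^ 2 = 1 ∧ T2 n ^ 2 = 1 ∧ T3 n ^ 2 = 1 ∧
    (T1 n * T2 n * T3 n) ^ 2 =
      (starRingEnd ℂ) (omg n) • (1 : Matrix (Fin n ⊕ Fin n) (Fin n ⊕ Fin n) ℂ) := by
  have hT1 : T1 n = Matrix.fromBlocks 0 (VOmega n) (myOi n) 0 := by
    rw [T1, VOmega_inv]
  have hT2 : T2 n = Matrix.fromBlocks 0 (Vshift n) (mySi n) 0 := by
    rw [T2, Vshift_inv n hn]
  have hT1sq : T1 n ^ 2 = 1 := by
    rw [sq, hT1, Matrix.fromBlocks_multiply]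
    simp [VOmega_mul_myOi, myOi_mul_VOmega, Matrix.fromBlocks_one]
  have hT2sq : T2 n ^ 2 = 1 := by
    rw [sq, hT2, Matrix.fromBlocks_multiply]
    simp [Vshift_mul_mySi n hn, mySi_mul_Vshift n hn, Matrix.fromBlocks_one]
  have hT3sq : T3 n ^ 2 = 1 := by
    rw [sq, T3, Matrix.fromBlocks_multiply]
    simp [Matrix.fromBlocks_one]
  have hT1h : star (T1 n) = T1 n := by
    rw [Matrix.star_eq_conjTranspose, hT1, Matrix.fromBlocks_conjTranspose,
      VOmega_conjT, myOi_conjT]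
    simp
  have hT2h : star (T2 n) = T2 n := by
    rw [Matrix.star_eq_conjTranspose, hT2, Matrix.fromBlocks_conjTranspose,
      Vshift_conjT, mySi_conjT]
    simp
  have hT3h : star (T3 n) = T3 n := by
    rw [Matrix.star_eq_conjTranspose, T3, Matrix.fromBlocks_conjTranspose]
    simp
  refine ⟨?_, ?_, ?_, hT1sq, hT2sq, hT3sq, ?_⟩
  · rw [Matrix.mem_unitaryGroup_iff, hT1h, ← sq, hT1sq]
  · rw [Matrix.mem_unitaryGroup_iff, hT2h, ← sq, hT2sq]
  · rw [Matrix.mem_unitaryGroup_iff, hT3h, ← sq, hT3sq]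
  · have h12 : T1 n * T2 n =
        Matrix.fromBlocks (VOmega n * mySi n) 0 0 (myOi n * Vshift n) := by
      rw [hT1, hT2, Matrix.fromBlocks_multiply]
      simp
    have h123 : T1 n * T2 n * T3 n =
        Matrix.fromBlocks 0 (VOmega n * mySi n) (myOi n * Vshift n) 0 := by
      rw [h12, T3, Matrix.fromBlocks_multiply]
      simp
    rw [sq, h123, Matrix.fromBlocks_multiply]
    simp only [Matrix.zero_mul, Matrix.mul_zero, add_zero, zero_add,
      key1 n hn, key2 n hn, conj_omg]
    rw [show ((omg n)⁻¹ • (1 : Matrix (Fin n ⊕ Fin n) (Fin n ⊕ Fin n) ℂ)) =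
        Matrix.fromBlocks ((omg n)⁻¹ • 1) 0 0 ((omg n)⁻¹ • 1) from by
      rw [← Matrix.fromBlocks_one, Matrix.fromBlocks_smul, smul_zero]]
end

section
/- For the 2×2 matrices V = (1/√2)[[1,1],[−1,1]], D = diag(1, λ) with λ = exp(4πi/3), and U = diag(1,−1), the additive commutator of VDV^{-1} with U equals [[0, 1−λ],[λ−1, 0]], and hence ‖[VDV^{-1}, U]‖ ≥ |λ − 1| = |exp(4πi/3) − 1|. -/
/-!
Conjugating `diag(a, b)` by the rotation `V` through `−π/4` gives `½ [[a+b, b−a], [b−a, a+b]]`,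
and the commutator with `diag(1, −1)` kills the diagonal and doubles the off-diagonal entries,
which leaves `[[0, 1−λ], [λ−1, 0]]`. The norm bound holds because every entry of a matrix is
bounded by its operator norm, as one sees by applying it to a standard basis vector.
-/

open Matrix

lemma norm_apply_le_opNorm {n : ℕ} (C : Matrix (Fin n) (Fin n) ℂ) (i j : Fin n) :
    ‖C i j‖ ≤ opNorm C := by
  set f := Matrix.toEuclideanCLM (n := Fin n) (𝕜 := ℂ) C
  have hcol : f (EuclideanSpace.single j 1) i = C i j := by simp [f]
  calc ‖C i j‖ = ‖f (EuclideanSpace.single j 1) i‖ := by rw [hcol]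
    _ ≤ ‖f (EuclideanSpace.single j 1)‖ := PiLp.norm_apply_le _ i
    _ ≤ ‖f‖ * ‖EuclideanSpace.single j (1 : ℂ)‖ := f.le_opNorm _
    _ = opNorm C := by simp [opNorm, f]

section TwoByTwo

variable {R : Type*} [CommRing R]

lemma commutator_diag_one_neg_one (M : Matrix (Fin 2) (Fin 2) R) :
    M * !![1, 0; 0, -1] - !![1, 0; 0, -1] * M = !![0, -2 * M 0 1; 2 * M 1 0, 0] := by
  rw [eta_fin_two M, mul_fin_two, mul_fin_two]
  ext i j
  fin_cases i <;> fin_cases j <;> simp <;> ring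

lemma inv_smul_rotation {c : R} (hc : 2 * c ^ 2 = 1) :
    (c • !![1, 1; -1, 1] : Matrix (Fin 2) (Fin 2) R)⁻¹ = c • !![1, -1; 1, 1] := by
  refine inv_eq_right_inv ?_
  ext i j
  fin_cases i <;> fin_cases j <;> simp [mul_apply, Fin.sum_univ_two] <;> linear_combination hc

lemma smul_rotation_mul_diag_mul_inv {c : R} (hc : 2 * c ^ 2 = 1) (a b : R) :
    (c • !![1, 1; -1, 1]) * !![a, 0; 0, b] * (c • !![1, 1; -1, 1])⁻¹ =
      c ^ 2 • !![a + b, b - a; b - a, a + b] := by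
  rw [inv_smul_rotation hc]
  ext i j
  fin_cases i <;> fin_cases j <;> simp [mul_apply, Fin.sum_univ_two] <;> ring

end TwoByTwo

lemma two_mul_inv_sqrt_two_sq : 2 * ((Real.sqrt 2 : ℂ)⁻¹) ^ 2 = 1 := by
  rw [inv_pow, ← Complex.ofReal_pow, Real.sq_sqrt zero_le_two]
  norm_num

/-- For `V = (1/√2)[[1,1],[−1,1]]`, `D = diag(1, λ)` with `λ = exp(4πi/3)` and
`U = diag(1,−1)`, the additive commutator of `VDV⁻¹` with `U` equals
`[[0, 1−λ],[λ−1, 0]]`, hence `‖[VDV⁻¹, U]‖ ≥ |λ − 1| = |exp(4πi/3) − 1|`. -/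
theorem stmt17 :
    ∀ lam V D U : _,
      lam = Complex.exp (4 * Real.pi * Complex.I / 3) →
      V = ((Real.sqrt 2 : ℂ))⁻¹ • (!![1, 1; -1, 1] : Matrix (Fin 2) (Fin 2) ℂ) →
      D = (!![1, 0; 0, lam] : Matrix (Fin 2) (Fin 2) ℂ) →
      U = (!![1, 0; 0, -1] : Matrix (Fin 2) (Fin 2) ℂ) →
      (V * D * V⁻¹) * U - U * (V * D * V⁻¹) = !![0, 1 - lam; lam - 1, 0] ∧
      ‖lam - 1‖ ≤ opNorm ((V * D * V⁻¹) * U - U * (V * D * V⁻¹)) := by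
  intro lam V D U _ hV hD hU
  have hc := two_mul_inv_sqrt_two_sq
  have hconj : V * D * V⁻¹ = (Real.sqrt 2 : ℂ)⁻¹ ^ 2 • !![1 + lam, lam - 1; lam - 1, 1 + lam] := by
    rw [hV, hD]
    exact smul_rotation_mul_diag_mul_inv hc 1 lam
  have hcomm : V * D * V⁻¹ * U - U * (V * D * V⁻¹) = !![0, 1 - lam; lam - 1, 0] := by
    rw [hU, commutator_diag_one_neg_one, hconj]
    ext i j
    fin_cases i <;> fin_cases j <;> simp
    · linear_combination (1 - lam) * hc
    · linear_combination (lam - 1) * hc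
  refine ⟨hcomm, ?_⟩
  rw [hcomm]
  simpa using norm_apply_le_opNorm !![0, 1 - lam; lam - 1, 0] 1 0
end

section
/- The winding number of the closed curve γ(r) = (r·exp(−4πi/n) + (1 − r))^{2n}, r ∈ [0,1] (interpreted as the determinant curve of the p2 approximate representation), about the origin equals −2 for n ≥ 5; in particular it is nonzero. -/
/-- The closed determinant curve of the p2 approximate representation,
`γ(r) = (r·ω̄_n + (1 − r))^{2n}` with `ω̄_n = exp(−2πi/n)`, has winding number `−2`
about the origin for `n ≥ 5`: any continuous logarithm `L` of `γ` on `[0,1]` satisfies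
`L 1 − L 0 = −2·(2πi)`; in particular the winding number is nonzero. -/
theorem stmt18 (n : ℕ) (hn : 5 ≤ n) (L : ℝ → ℂ)
    (hL : ContinuousOn L (Set.Icc 0 1))
    (hexp : ∀ r ∈ Set.Icc (0 : ℝ) 1,
      Complex.exp (L r) =
        ((r : ℂ) * Complex.exp (-(2 * Real.pi * Complex.I) / n) + (1 - (r : ℂ))) ^ (2 * n)) :
    L 1 - L 0 = -2 * (2 * Real.pi * Complex.I) := by
  have hn5 : (5:ℝ) ≤ n := by exact_mod_cast hn
  have hn0 : (0:ℝ) < n := by linarith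
  have hnC : (n:ℂ) ≠ 0 := by exact_mod_cast (show (n:ℝ) ≠ 0 by positivity)
  have hπ := Real.pi_pos
  set θ : ℝ := 2 * Real.pi / n with hθ
  have hθpos : 0 < θ := by positivity
  have hθlt : θ < Real.pi / 2 := by
    rw [hθ, div_lt_iff₀ hn0]; nlinarith
  -- the inner curve
  set ω : ℂ := Complex.exp (-(2 * Real.pi * Complex.I) / n) with hωdef
  have hωeq : ω = Complex.exp ((-θ : ℝ) * Complex.I) := by
    rw [hωdef]
    congr 1
    push_cast [hθ]
    field_simp
  set f : ℝ → ℂ := fun r => (r : ℂ) * ω + (1 - (r : ℂ)) with hf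
  have hcosθ : 0 < Real.cos θ :=
    Real.cos_pos_of_mem_Ioo ⟨by linarith, hθlt⟩
  have hre : ∀ r ∈ Set.Icc (0:ℝ) 1, 0 < (f r).re := by
    intro r hr
    have hωre : ω.re = Real.cos θ := by
      rw [hωeq, Complex.exp_ofReal_mul_I_re, Real.cos_neg]
    have : (f r).re = r * Real.cos θ + (1 - r) := by
      simp [hf, Complex.add_re, Complex.mul_re, hωre]
    rw [this]
    rcases hr with ⟨h0, h1⟩
    nlinarith [mul_nonneg (sub_nonneg.2 h1) (sub_nonneg.2 (Real.cos_le_one θ))]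
  have hfne : ∀ r ∈ Set.Icc (0:ℝ) 1, f r ≠ 0 := by
    intro r hr h
    have := hre r hr
    rw [h] at this; simp at this
  have hfslit : ∀ r ∈ Set.Icc (0:ℝ) 1, f r ∈ Complex.slitPlane := by
    intro r hr; exact Complex.mem_slitPlane_iff.2 (Or.inl (hre r hr))
  have hfcont : Continuous f := by fun_prop
  -- the reference logarithm
  set M : ℝ → ℂ := fun r => (2 * n : ℂ) * Complex.log (f r) with hM
  have hMcont : ContinuousOn M (Set.Icc 0 1) := by
    apply ContinuousOn.mul continuousOn_const
    intro r hr
    exact ((continuousAt_clog (hfslit r hr)).comp hfcont.continuousAt).continuousWithinAt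
  have hMexp : ∀ r ∈ Set.Icc (0:ℝ) 1, Complex.exp (M r) = f r ^ (2 * n) := by
    intro r hr
    rw [hM]
    have : ((2 * n : ℕ) : ℂ) = (2 * n : ℂ) := by push_cast; ring
    rw [← this, Complex.exp_nat_mul, Complex.exp_log (hfne r hr)]
  -- the difference of logs is a locally constant integer multiple of 2πi
  set D : ℝ → ℂ := fun r => L r - M r with hD
  have hDk : ∀ r ∈ Set.Icc (0:ℝ) 1, ∃ k : ℤ, D r = k * (2 * Real.pi * Complex.I) := by
    intro r hr
    rw [← Complex.exp_eq_one_iff, hD]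
    simp only
    rw [Complex.exp_sub, hexp r hr, hMexp r hr, div_self]
    exact pow_ne_zero _ (hfne r hr)
  set c : ℂ := 2 * Real.pi * Complex.I with hc
  have hcne : c ≠ 0 := by
    simp [hc, Complex.I_ne_zero, Real.pi_ne_zero]
  set g : ℝ → ℝ := fun r => (D r / c).re with hg
  have hgk : ∀ r ∈ Set.Icc (0:ℝ) 1, ∃ k : ℤ, g r = k := by
    intro r hr
    obtain ⟨k, hk⟩ := hDk r hr
    refine ⟨k, ?_⟩
    rw [hg]
    simp only [hk, mul_div_assoc, div_self hcne, mul_one]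
    simp
  have hgcont : ContinuousOn g (Set.Icc 0 1) := by
    apply Complex.continuous_re.comp_continuousOn
    exact (hL.sub hMcont).div_const c
  -- g is an integer-valued continuous function on a connected set, hence constant
  have hmem0 : (0:ℝ) ∈ Set.Icc (0:ℝ) 1 := by constructor <;> norm_num
  have hmem1 : (1:ℝ) ∈ Set.Icc (0:ℝ) 1 := by constructor <;> norm_num
  obtain ⟨k0, hk0⟩ := hgk 0 hmem0
  obtain ⟨k1, hk1⟩ := hgk 1 hmem1
  have hkeq : k0 = k1 := by
    by_contra hne
    have huIcc : Set.uIcc (0:ℝ) 1 = Set.Icc 0 1 := by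
      rw [Set.uIcc_of_le]; norm_num
    have hsub := intermediate_value_uIcc (f := g) (a := (0:ℝ)) (b := 1) (by rw [huIcc]; exact hgcont)
    have hmid : ((min k0 k1 : ℤ) : ℝ) + 1/2 ∈ Set.uIcc (g 0) (g 1) := by
      rw [hk0, hk1, Set.mem_uIcc]
      rcases lt_or_gt_of_ne hne with h | h
      · left
        constructor
        · push_cast [min_eq_left h.le]; linarith
        · have : (k0:ℝ) + 1 ≤ k1 := by exact_mod_cast (Int.add_one_le_iff.2 h)
          push_cast [min_eq_left h.le]; linarith
      · right
        constructor
        · push_cast [min_eq_right h.le]; linarith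
        · have : (k1:ℝ) + 1 ≤ k0 := by exact_mod_cast (Int.add_one_le_iff.2 h)
          push_cast [min_eq_right h.le]; linarith
    obtain ⟨r, hr, hgr⟩ := hsub hmid
    rw [huIcc] at hr
    obtain ⟨k, hk⟩ := hgk r hr
    rw [hk] at hgr
    set m : ℤ := min k0 k1
    have : (2*k : ℝ) = 2*m + 1 := by linarith
    have : (2*k : ℤ) = 2*m + 1 := by exact_mod_cast this
    omega
  -- recover D 0 = D 1
  obtain ⟨j0, hj0⟩ := hDk 0 hmem0
  obtain ⟨j1, hj1⟩ := hDk 1 hmem1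
  have hg0 : g 0 = (j0 : ℝ) := by
    rw [hg]; simp only [hj0, mul_div_assoc, div_self hcne, mul_one]; simp
  have hg1 : g 1 = (j1 : ℝ) := by
    rw [hg]; simp only [hj1, mul_div_assoc, div_self hcne, mul_one]; simp
  have hj : j0 = j1 := by
    have : (j0:ℝ) = j1 := by rw [← hg0, ← hg1, hk0, hk1, hkeq]
    exact_mod_cast this
  have hDeq : D 1 = D 0 := by rw [hj0, hj1, hj]
  -- compute M 1 - M 0
  have hf1 : f 1 = ω := by simp [hf]
  have hf0 : f 0 = 1 := by simp [hf]
  have hlogω : Complex.log ω = ((-θ : ℝ) : ℂ) * Complex.I := by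
    rw [hωeq]
    have him : (((-θ : ℝ) : ℂ) * Complex.I).im = -θ := by simp
    apply Complex.log_exp <;> rw [him]
    · linarith
    · linarith
  have hMdiff : M 1 - M 0 = -2 * (2 * Real.pi * Complex.I) := by
    rw [hM]
    simp only [hf1, hf0, Complex.log_one, mul_zero, sub_zero, hlogω]
    have hcast : ((-θ : ℝ) : ℂ) = -(2 * Real.pi) / n := by
      push_cast [hθ]; ring
    rw [hcast]
    field_simp
  have : L 1 - L 0 = (D 1 - D 0) + (M 1 - M 0) := by rw [hD]; ring
  rw [this, hDeq, sub_self, zero_add, hMdiff]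
end
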